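/- For all β, β' ∈ (0, 1), Γ*_{β'} ≤ max{ β'/β, (1 - β')/(1 - β) } · Γ*_β. In particular, the supremum of Γ*_{β'} over β' ∈ (0, 1) is at most 2·Γ*_{1/2}. -/

import Mathlib

/-- Kullback–Leibler divergence in a one-dimensional exponential family with
log-partition function `A`: `d(θ, x) = (θ - x)·A'(θ) - A(θ) + A(x)`. -/
noncomputable def dKL (A : ℝ → ℝ) (θ x : ℝ) : ℝ := (θ - x) * deriv A θ - A θ + A x

/-- `C(β, ψ) = inf_{x ∈ ℝ} β·d(θ₁, x) + ψ·d(θ₂, x)`. -/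
noncomputable def Cfun (A : ℝ → ℝ) (θ₁ θ₂ β ψ : ℝ) : ℝ :=
  ⨅ x : ℝ, (β * dKL A θ₁ x + ψ * dKL A θ₂ x)

/-- `Γ*_β`: the supremum, over nonnegative vectors `ψ` with `ψ_{I*} = β` and
`Σ ψ_i = 1`, of `min_{i ≠ I*} C_i(β, ψ_i)`. -/
noncomputable def Gamma (A : ℝ → ℝ) (k : ℕ) (θs : Fin k → ℝ) (Istar : Fin k) (β : ℝ) : ℝ :=
  sSup ((fun ψ : Fin k → ℝ =>
      ⨅ i : {i : Fin k // i ≠ Istar}, Cfun A (θs Istar) (θs i.1) β (ψ i.1)) ''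
    {ψ : Fin k → ℝ | (∀ i, 0 ≤ ψ i) ∧ ψ Istar = β ∧ (∑ i, ψ i) = 1})

/-!
Both the divergence-weighted objective `C(β, ψ)` and the constraint set scale well: `C` is
monotone and positively homogeneous in the weights `(β, ψ)`, and multiplying the weights of the
arms `i ≠ I*` by `(1 - β) / (1 - β')` turns an allocation with `ψ_{I*} = β'` into one with
`ψ_{I*} = β`. With `c = max{β'/β, (1 - β')/(1 - β)}` the original weights are then dominated by
`c` times the new ones, so every value attained for `β'` is at most `c` times one attained for
`β`. At `β = 1/2` the factor is `max{2β', 2(1 - β')} ≤ 2`.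
-/

open Set

theorem dKL_self (A : ℝ → ℝ) (θ : ℝ) : dKL A θ θ = 0 := by
  simp [dKL]

theorem dKL_nonneg {A : ℝ → ℝ} (hconv : ConvexOn ℝ univ A) {θ : ℝ}
    (hA : DifferentiableAt ℝ A θ) (x : ℝ) : 0 ≤ dKL A θ x := by
  rcases lt_trichotomy θ x with hθx | rfl | hxθ
  · have h := hconv.deriv_le_slope (mem_univ θ) (mem_univ x) hθx hA
    rw [slope_def_field, le_div_iff₀ (sub_pos.2 hθx)] at h
    unfold dKL; linarith
  · simp [dKL_self]
  · have h := hconv.slope_le_deriv (mem_univ x) (mem_univ θ) hxθ hA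
    rw [slope_def_field, div_le_iff₀ (sub_pos.2 hxθ)] at h
    unfold dKL; linarith

section Cfun

variable {A : ℝ → ℝ} {θ₁ θ₂ β ψ β' ψ' : ℝ}

theorem Cfun_bddBelow (hconv : ConvexOn ℝ univ A) (hA₁ : DifferentiableAt ℝ A θ₁)
    (hA₂ : DifferentiableAt ℝ A θ₂) (hβ : 0 ≤ β) (hψ : 0 ≤ ψ) :
    BddBelow (range fun x => β * dKL A θ₁ x + ψ * dKL A θ₂ x) :=
  ⟨0, forall_mem_range.2 fun x => add_nonneg (mul_nonneg hβ (dKL_nonneg hconv hA₁ x))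
    (mul_nonneg hψ (dKL_nonneg hconv hA₂ x))⟩

theorem Cfun_nonneg (hconv : ConvexOn ℝ univ A) (hA₁ : DifferentiableAt ℝ A θ₁)
    (hA₂ : DifferentiableAt ℝ A θ₂) (hβ : 0 ≤ β) (hψ : 0 ≤ ψ) : 0 ≤ Cfun A θ₁ θ₂ β ψ :=
  Real.iInf_nonneg fun x => add_nonneg (mul_nonneg hβ (dKL_nonneg hconv hA₁ x))
    (mul_nonneg hψ (dKL_nonneg hconv hA₂ x))

theorem Cfun_le_mul_dKL (hconv : ConvexOn ℝ univ A) (hA₁ : DifferentiableAt ℝ A θ₁)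
    (hA₂ : DifferentiableAt ℝ A θ₂) (hβ : 0 ≤ β) (hψ : 0 ≤ ψ) :
    Cfun A θ₁ θ₂ β ψ ≤ ψ * dKL A θ₂ θ₁ := by
  simpa [Cfun, dKL_self] using ciInf_le (Cfun_bddBelow hconv hA₁ hA₂ hβ hψ) θ₁

theorem Cfun_mono (hconv : ConvexOn ℝ univ A) (hA₁ : DifferentiableAt ℝ A θ₁)
    (hA₂ : DifferentiableAt ℝ A θ₂) (hβ' : 0 ≤ β') (hψ' : 0 ≤ ψ') (hβ : β' ≤ β) (hψ : ψ' ≤ ψ) :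
    Cfun A θ₁ θ₂ β' ψ' ≤ Cfun A θ₁ θ₂ β ψ :=
  ciInf_mono (Cfun_bddBelow hconv hA₁ hA₂ hβ' hψ') fun x =>
    add_le_add (mul_le_mul_of_nonneg_right hβ (dKL_nonneg hconv hA₁ x))
      (mul_le_mul_of_nonneg_right hψ (dKL_nonneg hconv hA₂ x))

theorem Cfun_mul {c : ℝ} (hc : 0 ≤ c) :
    Cfun A θ₁ θ₂ (c * β) (c * ψ) = c * Cfun A θ₁ θ₂ β ψ := by
  simp only [Cfun, Real.mul_iInf_of_nonneg hc, mul_add, mul_assoc]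

theorem Cfun_le_mul_of_le_mul (hconv : ConvexOn ℝ univ A) (hA₁ : DifferentiableAt ℝ A θ₁)
    (hA₂ : DifferentiableAt ℝ A θ₂) {c : ℝ} (hc : 0 ≤ c) (hβ' : 0 ≤ β') (hψ' : 0 ≤ ψ')
    (hβ : β' ≤ c * β) (hψ : ψ' ≤ c * ψ) :
    Cfun A θ₁ θ₂ β' ψ' ≤ c * Cfun A θ₁ θ₂ β ψ :=
  Cfun_mul hc ▸ Cfun_mono hconv hA₁ hA₂ hβ' hψ' hβ hψ

end Cfun

section Gamma

variable {A : ℝ → ℝ} {k : ℕ} {θs : Fin k → ℝ} {Istar : Fin k} {β β' c : ℝ} {ψ ψ' : Fin k → ℝ}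

variable (A θs Istar) in
noncomputable def gammaObjective (β : ℝ) (ψ : Fin k → ℝ) : ℝ :=
  ⨅ i : {i : Fin k // i ≠ Istar}, Cfun A (θs Istar) (θs i.1) β (ψ i.1)

variable (k Istar) in
def gammaFeasible (β : ℝ) : Set (Fin k → ℝ) :=
  {ψ | (∀ i, 0 ≤ ψ i) ∧ ψ Istar = β ∧ ∑ i, ψ i = 1}

theorem Gamma_eq_sSup :
    Gamma A k θs Istar β = sSup (gammaObjective A θs Istar β '' gammaFeasible k Istar β) :=
  rfl

theorem gammaObjective_nonneg (hconv : ConvexOn ℝ univ A) (hA : Differentiable ℝ A)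
    (hβ : 0 ≤ β) (hψ : ∀ i, 0 ≤ ψ i) : 0 ≤ gammaObjective A θs Istar β ψ :=
  Real.iInf_nonneg fun i => Cfun_nonneg hconv (hA _) (hA _) hβ (hψ i)

theorem gammaObjective_le_Cfun (hconv : ConvexOn ℝ univ A) (hA : Differentiable ℝ A)
    (hβ : 0 ≤ β) (hψ : ∀ i, 0 ≤ ψ i) {i : Fin k} (hi : i ≠ Istar) :
    gammaObjective A θs Istar β ψ ≤ Cfun A (θs Istar) (θs i) β (ψ i) :=
  ciInf_le (f := fun i : {i : Fin k // i ≠ Istar} => Cfun A (θs Istar) (θs i.1) β (ψ i.1))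
    ⟨0, forall_mem_range.2 fun i => Cfun_nonneg hconv (hA _) (hA _) hβ (hψ i)⟩ ⟨i, hi⟩

theorem gammaObjective_le_mul_of_le_mul (hconv : ConvexOn ℝ univ A) (hA : Differentiable ℝ A)
    (hc : 0 ≤ c) (hβ' : 0 ≤ β') (hψ' : ∀ i, 0 ≤ ψ' i) (hβ : β' ≤ c * β)
    (hψ : ∀ i ≠ Istar, ψ' i ≤ c * ψ i) :
    gammaObjective A θs Istar β' ψ' ≤ c * gammaObjective A θs Istar β ψ := by
  rw [gammaObjective, gammaObjective, Real.mul_iInf_of_nonneg hc]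
  refine ciInf_mono ⟨0, forall_mem_range.2 fun i => ?_⟩ fun i => ?_
  · exact Cfun_nonneg hconv (hA _) (hA _) hβ' (hψ' i)
  · exact Cfun_le_mul_of_le_mul hconv (hA _) (hA _) hc hβ' (hψ' i) hβ (hψ i.1 i.2)

theorem bddAbove_gammaObjective_image (hconv : ConvexOn ℝ univ A) (hA : Differentiable ℝ A)
    (hk : 2 ≤ k) (hβ : 0 ≤ β) :
    BddAbove (gammaObjective A θs Istar β '' gammaFeasible k Istar β) := by
  obtain ⟨i₀, hi₀⟩ := Fintype.exists_ne_of_one_lt_card (by simp; omega) Istar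
  refine ⟨dKL A (θs i₀) (θs Istar), ?_⟩
  rintro _ ⟨ψ, ⟨hψ, -, hsum⟩, rfl⟩
  have hψi₀ : ψ i₀ ≤ 1 := hsum ▸ Finset.single_le_sum (fun i _ => hψ i) (Finset.mem_univ i₀)
  calc gammaObjective A θs Istar β ψ ≤ Cfun A (θs Istar) (θs i₀) β (ψ i₀) :=
        gammaObjective_le_Cfun hconv hA hβ hψ hi₀
    _ ≤ ψ i₀ * dKL A (θs i₀) (θs Istar) := Cfun_le_mul_dKL hconv (hA _) (hA _) hβ (hψ i₀)
    _ ≤ dKL A (θs i₀) (θs Istar) :=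
        mul_le_of_le_one_left (dKL_nonneg hconv (hA _) _) hψi₀

theorem Gamma_nonneg (hconv : ConvexOn ℝ univ A) (hA : Differentiable ℝ A) (hβ : 0 ≤ β) :
    0 ≤ Gamma A k θs Istar β := by
  rw [Gamma_eq_sSup]
  exact Real.sSup_nonneg <| forall_mem_image.2 fun _ hψ => gammaObjective_nonneg hconv hA hβ hψ.1

theorem update_smul_mem_gammaFeasible (hβ : β ∈ Icc (0 : ℝ) 1) (hβ' : β' < 1)
    (hψ' : ψ' ∈ gammaFeasible k Istar β') :
    Function.update (((1 - β) / (1 - β')) • ψ') Istar β ∈ gammaFeasible k Istar β := by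
  obtain ⟨hψ'0, hψ'I, hψ'sum⟩ := hψ'
  have hr : 0 ≤ (1 - β) / (1 - β') := div_nonneg (by linarith [hβ.2]) (by linarith)
  refine ⟨fun i => ?_, by simp, ?_⟩
  · rcases eq_or_ne i Istar with rfl | hi
    · simpa using hβ.1
    · simpa [hi] using mul_nonneg hr (hψ'0 i)
  · rw [Finset.sum_eq_add_sum_sdiff_singleton_of_mem (Finset.mem_univ Istar), hψ'I] at hψ'sum
    rw [Finset.sum_update_of_mem (Finset.mem_univ Istar)]
    simp only [Pi.smul_apply, smul_eq_mul, ← Finset.mul_sum, eq_sub_of_add_eq' hψ'sum]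
    field_simp [(sub_pos.2 hβ').ne']
    ring

theorem Gamma_le_max_mul_Gamma (hconv : ConvexOn ℝ univ A) (hA : Differentiable ℝ A)
    (hk : 2 ≤ k) (hβ : β ∈ Ioo (0 : ℝ) 1) (hβ' : β' ∈ Ioo (0 : ℝ) 1) :
    Gamma A k θs Istar β' ≤ max (β' / β) ((1 - β') / (1 - β)) * Gamma A k θs Istar β := by
  set c := max (β' / β) ((1 - β') / (1 - β))
  have hc : 0 ≤ c := (div_pos hβ'.1 hβ.1).le.trans (le_max_left _ _)
  refine Real.sSup_le (forall_mem_image.2 fun ψ' hψ' => ?_)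
    (mul_nonneg hc (Gamma_nonneg hconv hA hβ.1.le))
  set ψ := Function.update (((1 - β) / (1 - β')) • ψ') Istar β
  have hψ : ψ ∈ gammaFeasible k Istar β :=
    update_smul_mem_gammaFeasible (Ioo_subset_Icc_self hβ) hβ'.2 hψ'
  have hβc : β' ≤ c * β := (div_le_iff₀ hβ.1).1 (le_max_left _ _)
  have hψc : ∀ i ≠ Istar, ψ' i ≤ c * ψ i := by
    intro i hi
    have hr : 0 ≤ (1 - β) / (1 - β') := div_nonneg (by linarith [hβ.2]) (by linarith [hβ'.2])
    simp only [ψ, Function.update_of_ne hi, Pi.smul_apply, smul_eq_mul]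
    calc ψ' i = (1 - β') / (1 - β) * ((1 - β) / (1 - β') * ψ' i) := by
          field_simp [(sub_pos.2 hβ.2).ne', (sub_pos.2 hβ'.2).ne']
      _ ≤ c * ((1 - β) / (1 - β') * ψ' i) :=
          mul_le_mul_of_nonneg_right (le_max_right _ _) (mul_nonneg hr (hψ'.1 i))
  calc gammaObjective A θs Istar β' ψ' ≤ c * gammaObjective A θs Istar β ψ :=
        gammaObjective_le_mul_of_le_mul hconv hA hc hβ'.1.le hψ'.1 hβc hψc
    _ ≤ c * Gamma A k θs Istar β := mul_le_mul_of_nonneg_left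
        (le_csSup (bddAbove_gammaObjective_image hconv hA hk hβ.1.le) (mem_image_of_mem _ hψ)) hc

theorem sSup_Gamma_le_two_mul_Gamma_half (hconv : ConvexOn ℝ univ A) (hA : Differentiable ℝ A)
    (hk : 2 ≤ k) : sSup (Gamma A k θs Istar '' Ioo 0 1) ≤ 2 * Gamma A k θs Istar (1 / 2) := by
  have hhalf : (1 / 2 : ℝ) ∈ Ioo 0 1 := by norm_num
  have hΓ := Gamma_nonneg hconv hA (θs := θs) (Istar := Istar) hhalf.1.le
  refine Real.sSup_le (forall_mem_image.2 fun β' hβ' => ?_) (by positivity)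
  calc Gamma A k θs Istar β'
      ≤ max (β' / (1 / 2)) ((1 - β') / (1 - 1 / 2)) * Gamma A k θs Istar (1 / 2) :=
        Gamma_le_max_mul_Gamma hconv hA hk hhalf hβ'
    _ ≤ 2 * Gamma A k θs Istar (1 / 2) := by
        gcongr
        exact max_le ((div_le_iff₀ (by norm_num)).2 (by linarith [hβ'.2]))
          ((div_le_iff₀ (by norm_num)).2 (by linarith [hβ'.1]))

end Gamma

theorem stmt_7_general (A : ℝ → ℝ) (hA : Differentiable ℝ A)
    (hconv : StrictConvexOn ℝ (Set.univ : Set ℝ) A)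
    (k : ℕ) (hk : 2 ≤ k)
    (θs : Fin k → ℝ)
    (Istar : Fin k) :
    (∀ β β' : ℝ, β ∈ Set.Ioo (0:ℝ) 1 → β' ∈ Set.Ioo (0:ℝ) 1 →
      Gamma A k θs Istar β' ≤
        max (β' / β) ((1 - β') / (1 - β)) * Gamma A k θs Istar β) ∧
    sSup (Gamma A k θs Istar '' Set.Ioo (0:ℝ) 1) ≤ 2 * Gamma A k θs Istar (1/2) :=
  ⟨fun _ _ hβ hβ' => Gamma_le_max_mul_Gamma hconv.convexOn hA hk hβ hβ',
    sSup_Gamma_le_two_mul_Gamma_half hconv.convexOn hA hk⟩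

/-- For all `β, β' ∈ (0,1)`, `Γ*_{β'} ≤ max{β'/β, (1-β')/(1-β)}·Γ*_β`; in
particular `sup_{β' ∈ (0,1)} Γ*_{β'} ≤ 2·Γ*_{1/2}`. -/
theorem stmt_7 (A : ℝ → ℝ) (hA : Differentiable ℝ A)
    (hconv : StrictConvexOn ℝ (Set.univ : Set ℝ) A)
    (lo hi : ℝ) (hlh : lo < hi) (k : ℕ) (hk : 2 ≤ k)
    (θs : Fin k → ℝ) (hθs : ∀ j, θs j ∈ Set.Ioo lo hi)
    (Istar : Fin k) (hIstar : ∀ j, j ≠ Istar → θs j < θs Istar) :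
    (∀ β β' : ℝ, β ∈ Set.Ioo (0:ℝ) 1 → β' ∈ Set.Ioo (0:ℝ) 1 →
      Gamma A k θs Istar β' ≤
        max (β' / β) ((1 - β') / (1 - β)) * Gamma A k θs Istar β) ∧
    sSup (Gamma A k θs Istar '' Set.Ioo (0:ℝ) 1) ≤ 2 * Gamma A k θs Istar (1/2) :=
  stmt_7_general A hA hconv k hk θs Istar
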